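/- Let θ_OLS = E[ΔΔ']⁻¹E[Δp] be the population OLS estimand where p = Δ*'θ₀ + ω₀ and Δ is a random 2-vector with E[ΔΔ'] positive definite. Define Δ_OLS = Δ'θ_OLS and hₘ = E[Δ(p − Δ'θₘ)]. Then h₁'W h₁ − h₂'W h₂ with W = E[ΔΔ']⁻¹ equals E[(Δ_OLS − Δ'θ₁)²] − E[(Δ_OLS − Δ'θ₂)²], i.e., RSS-based model comparison asymptotically compares distances of each model's markups to the OLS-projected markups. -/

import Mathlib

/-!
Write `M = E[ΔΔ']` and `b = E[Δp]`, so that `θ_OLS = M⁻¹b`. The OLS moment of a parameter `θ`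
is `hθ = b - Mθ = M(θ_OLS - θ)`, hence `hθ'M⁻¹hθ = (θ_OLS - θ)'M(θ_OLS - θ)`, and this quadratic
form is `E[(Δ'(θ_OLS - θ))²] = E[(Δ_OLS - Δ'θ)²]`. Subtracting the identities for `θ₁` and `θ₂`
gives the theorem.
-/

open MeasureTheory Matrix

namespace OLS

variable {Ω ι : Type*} [MeasurableSpace Ω] [Fintype ι] (μ : Measure Ω) (Δ : Ω → ι → ℝ)

noncomputable def secondMoment : Matrix ι ι ℝ := of fun i j => ∫ ω, Δ ω i * Δ ω j ∂μ

noncomputable def crossMoment (p : Ω → ℝ) : ι → ℝ := fun i => ∫ ω, Δ ω i * p ω ∂μ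

variable {μ Δ}

lemma integrable_mul_dotProduct (hΔ : ∀ k, MemLp (fun ω => Δ ω k) 2 μ) (θ : ι → ℝ) (i : ι) :
    Integrable (fun ω => Δ ω i * (Δ ω ⬝ᵥ θ)) μ := by
  simp only [dotProduct, Finset.mul_sum, ← mul_assoc]
  exact integrable_finsetSum _ fun j _ => ((hΔ i).integrable_mul (hΔ j)).mul_const (θ j)

lemma integral_mul_dotProduct (hΔ : ∀ k, MemLp (fun ω => Δ ω k) 2 μ) (θ : ι → ℝ) (i : ι) :
    ∫ ω, Δ ω i * (Δ ω ⬝ᵥ θ) ∂μ = (secondMoment μ Δ *ᵥ θ) i := by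
  simp only [dotProduct, Finset.mul_sum, ← mul_assoc]
  rw [integral_finsetSum (f := fun j ω => Δ ω i * Δ ω j * θ j) _
    fun j _ => ((hΔ i).integrable_mul (hΔ j)).mul_const (θ j)]
  simp only [integral_mul_const, mulVec, dotProduct, secondMoment, of_apply]

lemma integral_dotProduct_sq (hΔ : ∀ k, MemLp (fun ω => Δ ω k) 2 μ) (v : ι → ℝ) :
    ∫ ω, (Δ ω ⬝ᵥ v) ^ 2 ∂μ = v ⬝ᵥ (secondMoment μ Δ *ᵥ v) := by
  have hsum : (fun ω => (Δ ω ⬝ᵥ v) ^ 2) = fun ω => ∑ i, v i * (Δ ω i * (Δ ω ⬝ᵥ v)) := by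
    funext ω
    exact (sq _).trans <| Finset.sum_mul .. |>.trans <| Finset.sum_congr rfl fun i _ => by ring
  rw [hsum, integral_finsetSum _ fun i _ => (integrable_mul_dotProduct hΔ v i).const_mul (v i)]
  simp_rw [integral_const_mul, integral_mul_dotProduct hΔ]
  rfl

lemma integral_mul_residual (hΔ : ∀ k, MemLp (fun ω => Δ ω k) 2 μ) {p : Ω → ℝ}
    (hp : MemLp p 2 μ) (θ : ι → ℝ) :
    (fun i => ∫ ω, Δ ω i * (p ω - Δ ω ⬝ᵥ θ) ∂μ) = crossMoment μ Δ p - secondMoment μ Δ *ᵥ θ := by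
  funext i
  simp only [mul_sub]
  rw [integral_sub (f := fun ω => Δ ω i * p ω) ((hΔ i).integrable_mul hp)
    (integrable_mul_dotProduct hΔ θ i), integral_mul_dotProduct hΔ]
  rfl

end OLS

lemma Matrix.dotProduct_inv_mulVec_mulVec {n : Type*} [Fintype n] [DecidableEq n]
    {α : Type*} [CommRing α] {A : Matrix n n α} (hA : IsUnit A.det) (v : n → α) :
    (A *ᵥ v) ⬝ᵥ (A⁻¹ *ᵥ (A *ᵥ v)) = v ⬝ᵥ (A *ᵥ v) := by
  rw [mulVec_mulVec, nonsing_inv_mul A hA, one_mulVec, dotProduct_comm]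

open OLS in
theorem stmt_13_general {Ω : Type*} [MeasurableSpace Ω] (μ : Measure Ω)
    (Δ : Ω → Fin 2 → ℝ) (p : Ω → ℝ)
    (hΔmem : ∀ k, MemLp (fun ω => Δ ω k) 2 μ) (hpmem : MemLp p 2 μ)
    (EΔΔ : Matrix (Fin 2) (Fin 2) ℝ)
    (hEΔΔ : EΔΔ = Matrix.of fun i j => ∫ ω, Δ ω i * Δ ω j ∂μ)
    (hpos : EΔΔ.PosDef)
    (θOLS : Fin 2 → ℝ)
    (hθOLS : θOLS = EΔΔ⁻¹ *ᵥ fun i => ∫ ω, Δ ω i * p ω ∂μ)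
    (ΔOLS : Ω → ℝ) (hΔOLS : ΔOLS = fun ω => Δ ω ⬝ᵥ θOLS)
    (θ₁ θ₂ : Fin 2 → ℝ)
    (h₁ h₂ : Fin 2 → ℝ)
    (hh₁ : h₁ = fun i => ∫ ω, Δ ω i * (p ω - Δ ω ⬝ᵥ θ₁) ∂μ)
    (hh₂ : h₂ = fun i => ∫ ω, Δ ω i * (p ω - Δ ω ⬝ᵥ θ₂) ∂μ) :
    h₁ ⬝ᵥ (EΔΔ⁻¹ *ᵥ h₁) - h₂ ⬝ᵥ (EΔΔ⁻¹ *ᵥ h₂) =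
      (∫ ω, (ΔOLS ω - Δ ω ⬝ᵥ θ₁) ^ 2 ∂μ) - (∫ ω, (ΔOLS ω - Δ ω ⬝ᵥ θ₂) ^ 2 ∂μ) := by
  have hdet : IsUnit EΔΔ.det := isUnit_iff_ne_zero.mpr hpos.det_pos.ne'
  have hM : EΔΔ = secondMoment μ Δ := hEΔΔ
  have hmoment : ∀ θ, (fun i => ∫ ω, Δ ω i * (p ω - Δ ω ⬝ᵥ θ) ∂μ) = EΔΔ *ᵥ (θOLS - θ) := by
    intro θ
    rw [integral_mul_residual hΔmem hpmem, mulVec_sub, hθOLS, mulVec_mulVec,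
      mul_nonsing_inv _ hdet, one_mulVec, hM]
    rfl
  have hsq : ∀ θ, ∫ ω, (ΔOLS ω - Δ ω ⬝ᵥ θ) ^ 2 ∂μ = (θOLS - θ) ⬝ᵥ (EΔΔ *ᵥ (θOLS - θ)) := by
    intro θ
    simp only [hΔOLS, ← dotProduct_sub, hM]
    exact integral_dotProduct_sq hΔmem _
  rw [hh₁, hh₂, hmoment, hmoment, dotProduct_inv_mulVec_mulVec hdet,
    dotProduct_inv_mulVec_mulVec hdet, hsq, hsq]

/-- With `θ_OLS = E[ΔΔ']⁻¹E[Δp]`, `Δ_OLS = Δ'θ_OLS` and OLS moments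
`hₘ = E[Δ(p − Δ'θₘ)]`, the weighted difference `h₁'Wh₁ − h₂'Wh₂` with
`W = E[ΔΔ']⁻¹` equals `E[(Δ_OLS − Δ'θ₁)²] − E[(Δ_OLS − Δ'θ₂)²]`. -/
theorem stmt_13 {Ω : Type*} [MeasurableSpace Ω] (μ : Measure Ω) [IsProbabilityMeasure μ]
    (Δ : Ω → Fin 2 → ℝ) (p : Ω → ℝ)
    (hΔmem : ∀ k, MemLp (fun ω => Δ ω k) 2 μ) (hpmem : MemLp p 2 μ)
    (EΔΔ : Matrix (Fin 2) (Fin 2) ℝ)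
    (hEΔΔ : EΔΔ = Matrix.of fun i j => ∫ ω, Δ ω i * Δ ω j ∂μ)
    (hpos : EΔΔ.PosDef)
    (θOLS : Fin 2 → ℝ)
    (hθOLS : θOLS = EΔΔ⁻¹ *ᵥ fun i => ∫ ω, Δ ω i * p ω ∂μ)
    (ΔOLS : Ω → ℝ) (hΔOLS : ΔOLS = fun ω => Δ ω ⬝ᵥ θOLS)
    (θ₁ θ₂ : Fin 2 → ℝ)
    (h₁ h₂ : Fin 2 → ℝ)
    (hh₁ : h₁ = fun i => ∫ ω, Δ ω i * (p ω - Δ ω ⬝ᵥ θ₁) ∂μ)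
    (hh₂ : h₂ = fun i => ∫ ω, Δ ω i * (p ω - Δ ω ⬝ᵥ θ₂) ∂μ) :
    h₁ ⬝ᵥ (EΔΔ⁻¹ *ᵥ h₁) - h₂ ⬝ᵥ (EΔΔ⁻¹ *ᵥ h₂) =
      (∫ ω, (ΔOLS ω - Δ ω ⬝ᵥ θ₁) ^ 2 ∂μ) - (∫ ω, (ΔOLS ω - Δ ω ⬝ᵥ θ₂) ^ 2 ∂μ) :=
  stmt_13_general μ Δ p hΔmem hpmem EΔΔ hEΔΔ hpos θOLS hθOLS ΔOLS hΔOLS θ₁ θ₂ h₁ h₂ hh₁ hh₂
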